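/- arXiv:1407.5537 — 3 statements merged into one kernel-verified Lean document; each statement's English description precedes it below -/
import Mathlib

section
/- Let λ > 0, D > 0, C ∈ (0, 1], α_l, α_n > 0, and let S_l, S_n be lognormal random variables with parameters (m_l, σ_l²) and (m_n, σ_n²) respectively. Define, for t > 0, Λ(t) := 2πλ·[ C·∫₀^D P(t·S_l > r^{α_l}) r dr + (1−C)·∫₀^D P(t·S_n > r^{α_n}) r dr + ∫_D^∞ P(t·S_n > r^{α_n}) r dr ]. Then Λ(t) = λπC·{ D²·[ Q((ln(D^{α_l}/t) − m_l)/σ_l) − Q((ln(D^{α_n}/t) − m_n)/σ_n) ] + t^{2/α_l}·exp(2σ_l²/α_l² + 2m_l/α_l)·Q((σ_l²·(2/α_l) − ln(D^{α_l}/t) + m_l)/σ_l) + t^{2/α_n}·exp(2σ_n²/α_n² + 2m_n/α_n)·[ 1/C − Q((σ_n²·(2/α_n) − ln(D^{α_n}/t) + m_n)/σ_n) ] }. -/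
/-!
Since `P(t S > r^α) = Q(u(r))` with `u(r) = (log (r^α / t) - m) / σ`, every radial integral
`∫ Q(u(r)) r dr` has the explicit primitive `t^(2/α) F(log (r^α / t))`, where
`F(L) = E[min (e^(2L/α)) (e^(2X/α))] / 2` for `X ~ N(m, σ²)`. In `F'` the two Gaussian density
terms cancel after completing the square, leaving `e^(2L/α) Q((L - m)/σ) / α`. Finally `F → 0`
at `-∞` (bounded `Q`), and `F → E[e^(2X/α)] / 2` at `+∞` (Chernoff bound on `Q`), which
evaluates the integrals over `(0, D)` and `(D, ∞)`.
-/

open MeasureTheory ProbabilityTheory Real Set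

/-- The standard Gaussian tail function `Q(x) = ∫_x^∞ (1/√(2π)) e^{-u²/2} du`. -/
noncomputable def gaussQ (x : ℝ) : ℝ :=
  ∫ u in Set.Ioi x, Real.exp (-u ^ 2 / 2) / Real.sqrt (2 * Real.pi)

open Filter Topology

lemma gaussianPDFReal_zero_one (u : ℝ) :
    gaussianPDFReal 0 1 u = Real.exp (-u ^ 2 / 2) / Real.sqrt (2 * Real.pi) := by
  simp [gaussianPDFReal, div_eq_inv_mul]

lemma continuous_gaussianPDFReal (μ : ℝ) (v : NNReal) : Continuous (gaussianPDFReal μ v) := by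
  unfold gaussianPDFReal; fun_prop

lemma gaussQ_eq_integral_gaussianPDFReal (x : ℝ) :
    gaussQ x = ∫ u in Ioi x, gaussianPDFReal 0 1 u := by
  simp only [gaussQ, gaussianPDFReal_zero_one]

lemma gaussQ_eq_measureReal (x : ℝ) : gaussQ x = (gaussianReal 0 1).real (Ioi x) := by
  rw [measureReal_def, gaussianReal_apply_eq_integral 0 one_ne_zero,
    ENNReal.toReal_ofReal (setIntegral_nonneg measurableSet_Ioi fun u _ ↦
      gaussianPDFReal_nonneg 0 1 u), gaussQ_eq_integral_gaussianPDFReal]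

lemma gaussQ_eq_one_sub_cdf (x : ℝ) : gaussQ x = 1 - cdf (gaussianReal 0 1) x := by
  rw [gaussQ_eq_measureReal, cdf_eq_real, ← compl_Iic, measureReal_compl measurableSet_Iic,
    probReal_univ]

lemma gaussQ_nonneg (x : ℝ) : 0 ≤ gaussQ x := by
  simpa [gaussQ_eq_one_sub_cdf] using cdf_le_one _ x

lemma gaussQ_le_one (x : ℝ) : gaussQ x ≤ 1 := by
  simpa [gaussQ_eq_one_sub_cdf] using cdf_nonneg _ x

lemma tendsto_gaussQ_atTop : Tendsto gaussQ atTop (𝓝 0) := by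
  rw [funext gaussQ_eq_one_sub_cdf]
  simpa using (tendsto_cdf_atTop (gaussianReal 0 1)).const_sub 1

lemma tendsto_gaussQ_atBot : Tendsto gaussQ atBot (𝓝 1) := by
  rw [funext gaussQ_eq_one_sub_cdf]
  simpa using (tendsto_cdf_atBot (gaussianReal 0 1)).const_sub 1

lemma hasDerivAt_gaussQ (x : ℝ) : HasDerivAt gaussQ (-gaussianPDFReal 0 1 x) x := by
  have hint : ∀ a, IntegrableOn (gaussianPDFReal 0 1) (Ioi a) := fun a ↦
    (integrable_gaussianPDFReal 0 1).integrableOn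
  have h : gaussQ = fun y ↦ gaussQ 0 - ∫ u in (0 : ℝ)..y, gaussianPDFReal 0 1 u := by
    ext y
    rw [gaussQ_eq_integral_gaussianPDFReal, gaussQ_eq_integral_gaussianPDFReal,
      ← intervalIntegral.integral_Ioi_sub_Ioi' (hint 0) (hint y), sub_sub_cancel]
  rw [h]
  exact ((continuous_gaussianPDFReal 0 1).integral_hasStrictDerivAt 0 x).hasDerivAt.const_sub
    (gaussQ 0)

lemma continuous_gaussQ : Continuous gaussQ :=
  continuous_iff_continuousAt.2 fun x ↦ (hasDerivAt_gaussQ x).continuousAt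

lemma gaussQ_le_exp {θ : ℝ} (hθ : 0 ≤ θ) (x : ℝ) : gaussQ x ≤ exp (-θ * x + θ ^ 2 / 2) := by
  calc gaussQ x ≤ (gaussianReal 0 1).real {y | x ≤ id y} := by
        rw [gaussQ_eq_measureReal]
        exact measureReal_mono fun y (hy : x < y) ↦ hy.le
    _ ≤ exp (-θ * x) * mgf id (gaussianReal 0 1) θ :=
        measure_ge_le_exp_mul_mgf x hθ (integrable_exp_mul_gaussianReal θ)
    _ = exp (-θ * x + θ ^ 2 / 2) := by
        rw [mgf_id_gaussianReal, exp_add]; simp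

lemma gaussianReal_real_Ioi {σ : ℝ} (hσ : 0 < σ) (m b : ℝ) :
    (gaussianReal m (σ ^ 2).toNNReal).real (Ioi b) = gaussQ ((b - m) / σ) := by
  have hstd : gaussianReal m (σ ^ 2).toNNReal
      = ((gaussianReal 0 1).map (σ * ·)).map (· + m) := by
    rw [gaussianReal_map_const_mul, gaussianReal_map_add_const, mul_zero, zero_add, mul_one]
    congr
    ext
    simp [sq_nonneg]
  rw [hstd, measureReal_def, Measure.map_apply (measurable_add_const m) measurableSet_Ioi,
    preimage_add_const_Ioi, Measure.map_apply (measurable_const_mul σ) measurableSet_Ioi,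
    preimage_const_mul_Ioi₀ _ hσ, ← measureReal_def, gaussQ_eq_measureReal]

lemma measureReal_lt_eq_gaussQ_of_map_log {Ω : Type*} [MeasurableSpace Ω] {P : Measure Ω}
    {S : Ω → ℝ} (hS : Measurable S) (hSpos : ∀ᵐ ω ∂P, 0 < S ω) {m σ : ℝ} (hσ : 0 < σ)
    (hlog : P.map (fun ω ↦ log (S ω)) = gaussianReal m (σ ^ 2).toNNReal)
    {a : ℝ} (ha : 0 < a) :
    P.real {ω | a < S ω} = gaussQ ((log a - m) / σ) := by
  have hset : {ω | a < S ω} =ᵐ[P] (fun ω ↦ log (S ω)) ⁻¹' Ioi (log a) := by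
    filter_upwards [hSpos] with ω hω
    exact propext (log_lt_log_iff ha hω).symm
  rw [measureReal_congr hset, ← map_measureReal_apply (by fun_prop) measurableSet_Ioi, hlog,
    gaussianReal_real_Ioi hσ]

section TailPrimitive

variable {α σ : ℝ} (m : ℝ)

/-- For `X ~ N(m, σ²)` this is `E[min (exp (2 L / α)) (exp (2 X / α))] / 2`. -/
noncomputable def tailPrimitive (α σ m L : ℝ) : ℝ :=
  exp (2 * L / α) / 2 * gaussQ ((L - m) / σ)
    + exp (2 * σ ^ 2 / α ^ 2 + 2 * m / α) / 2 * gaussQ ((σ ^ 2 * (2 / α) - L + m) / σ)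

lemma exp_mul_gaussianPDFReal_reflect (hα : α ≠ 0) (hσ : σ ≠ 0) (L : ℝ) :
    exp (2 * σ ^ 2 / α ^ 2 + 2 * m / α) * gaussianPDFReal 0 1 ((σ ^ 2 * (2 / α) - L + m) / σ)
      = exp (2 * L / α) * gaussianPDFReal 0 1 ((L - m) / σ) := by
  simp only [gaussianPDFReal_zero_one, mul_div_assoc', ← exp_add]
  congr 2
  field_simp
  ring

lemma hasDerivAt_tailPrimitive (hα : α ≠ 0) (hσ : σ ≠ 0) (L : ℝ) :
    HasDerivAt (tailPrimitive α σ m) (exp (2 * L / α) / α * gaussQ ((L - m) / σ)) L := by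
  have hu : HasDerivAt (fun L ↦ (L - m) / σ) (1 / σ) L :=
    ((hasDerivAt_id' L).sub_const m).div_const σ
  have hv : HasDerivAt (fun L ↦ (σ ^ 2 * (2 / α) - L + m) / σ) (-1 / σ) L :=
    (((hasDerivAt_id' L).const_sub _).add_const m).div_const σ
  have he : HasDerivAt (fun L ↦ exp (2 * L / α) / 2) (exp (2 * L / α) / α) L :=
    ((((hasDerivAt_id' L).const_mul 2).div_const α).exp.div_const 2).congr_deriv
      (by field_simp)
  refine ((he.mul ((hasDerivAt_gaussQ _).comp L hu)).add
    (((hasDerivAt_gaussQ _).comp L hv).const_mul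
      (exp (2 * σ ^ 2 / α ^ 2 + 2 * m / α) / 2))).congr_deriv ?_
  simp only [Function.comp_apply]
  linear_combination 1 / (2 * σ) * exp_mul_gaussianPDFReal_reflect m hα hσ L

lemma tendsto_tailPrimitive_atBot (hα : 0 < α) (hσ : 0 < σ) :
    Tendsto (tailPrimitive α σ m) atBot (𝓝 0) := by
  have hexp : Tendsto (fun L ↦ exp (2 * L / α) / 2) atBot (𝓝 0) := by
    have : Tendsto (fun L ↦ 2 * L / α) atBot atBot :=
      (tendsto_id.const_mul_atBot two_pos).atBot_div_const hα
    simpa using (tendsto_exp_atBot.comp this).div_const 2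
  have hfirst : Tendsto (fun L ↦ exp (2 * L / α) / 2 * gaussQ ((L - m) / σ)) atBot (𝓝 0) :=
    squeeze_zero_norm (fun L ↦ by
      rw [norm_mul, Real.norm_of_nonneg (by positivity), Real.norm_of_nonneg (gaussQ_nonneg _)]
      exact mul_le_of_le_one_right (by positivity) (gaussQ_le_one _)) hexp
  have harg : Tendsto (fun L ↦ (σ ^ 2 * (2 / α) - L + m) / σ) atBot atTop :=
    ((tendsto_atTop_add_const_right _ m
      (tendsto_atTop_add_const_left _ _ tendsto_neg_atBot_atTop)).atTop_div_const hσ)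
  have h := hfirst.add ((tendsto_gaussQ_atTop.comp harg).const_mul
    (exp (2 * σ ^ 2 / α ^ 2 + 2 * m / α) / 2))
  rwa [mul_zero, add_zero] at h

lemma tendsto_tailPrimitive_atTop (hα : 0 < α) (hσ : 0 < σ) :
    Tendsto (tailPrimitive α σ m) atTop (𝓝 (exp (2 * σ ^ 2 / α ^ 2 + 2 * m / α) / 2)) := by
  have hmajorant : Tendsto (fun L ↦ exp (-L / α + 3 * m / α + 9 * σ ^ 2 / (2 * α ^ 2)) / 2)
      atTop (𝓝 0) := by
    have : Tendsto (fun L ↦ -L / α + 3 * m / α + 9 * σ ^ 2 / (2 * α ^ 2)) atTop atBot :=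
      tendsto_atBot_add_const_right _ _ (tendsto_atBot_add_const_right _ _
        (tendsto_neg_atTop_atBot.atBot_div_const hα))
    simpa using (tendsto_exp_atBot.comp this).div_const 2
  -- Chernoff with `θ = 3σ/α` beats the growth `exp (2 L / α)`.
  have hfirst :
      Tendsto (fun L ↦ exp (2 * L / α) / 2 * gaussQ ((L - m) / σ)) atTop (𝓝 0) := by
    refine squeeze_zero (fun L ↦ mul_nonneg (by positivity) (gaussQ_nonneg _)) (fun L ↦ ?_)
      hmajorant
    calc exp (2 * L / α) / 2 * gaussQ ((L - m) / σ)
        ≤ exp (2 * L / α) / 2 * exp (-(3 * σ / α) * ((L - m) / σ) + (3 * σ / α) ^ 2 / 2) :=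
          mul_le_mul_of_nonneg_left (gaussQ_le_exp (by positivity) _) (by positivity)
      _ = exp (-L / α + 3 * m / α + 9 * σ ^ 2 / (2 * α ^ 2)) / 2 := by
          rw [div_mul_eq_mul_div, ← exp_add]
          congr 2
          field_simp
          ring
  have harg : Tendsto (fun L ↦ (σ ^ 2 * (2 / α) - L + m) / σ) atTop atBot :=
    (tendsto_atBot_add_const_right _ m
      (tendsto_atBot_add_const_left _ _ tendsto_neg_atTop_atBot)).atBot_div_const hσ
  have h := hfirst.add ((tendsto_gaussQ_atBot.comp harg).const_mul
    (exp (2 * σ ^ 2 / α ^ 2 + 2 * m / α) / 2))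
  rwa [mul_one, zero_add] at h

end TailPrimitive

section Radial

variable {α σ t : ℝ} (m : ℝ)

lemma log_rpow_div {r : ℝ} (hr : 0 < r) (ht : 0 < t) :
    log (r ^ α / t) = α * log r - log t := by
  rw [log_div (rpow_pos_of_pos hr α).ne' ht.ne', log_rpow hr]

lemma rpow_two_div_mul_exp_log_rpow_div (hα : α ≠ 0) (ht : 0 < t) {r : ℝ} (hr : 0 < r) :
    t ^ (2 / α) * exp (2 * log (r ^ α / t) / α) = r ^ 2 := by
  rw [show 2 * log (r ^ α / t) / α = log (r ^ α / t) * (2 / α) by ring,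
    ← rpow_def_of_pos (div_pos (rpow_pos_of_pos hr α) ht),
    div_rpow (rpow_nonneg hr.le α) ht.le, mul_div_cancel₀ _ (rpow_pos_of_pos ht _).ne',
    ← rpow_mul hr.le, mul_div_cancel₀ _ hα, rpow_two]

lemma rpow_mul_tailPrimitive_log_rpow_div (hα : α ≠ 0) (ht : 0 < t) {r : ℝ} (hr : 0 < r) :
    t ^ (2 / α) * tailPrimitive α σ m (log (r ^ α / t))
      = r ^ 2 / 2 * gaussQ ((log (r ^ α / t) - m) / σ)
        + t ^ (2 / α) * exp (2 * σ ^ 2 / α ^ 2 + 2 * m / α) / 2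
          * gaussQ ((σ ^ 2 * (2 / α) - log (r ^ α / t) + m) / σ) := by
  rw [tailPrimitive, ← rpow_two_div_mul_exp_log_rpow_div hα ht hr]
  ring

lemma hasDerivAt_rpow_mul_tailPrimitive_log_rpow_div (hα : α ≠ 0) (hσ : σ ≠ 0) (ht : 0 < t)
    {r : ℝ} (hr : 0 < r) :
    HasDerivAt (fun r ↦ t ^ (2 / α) * tailPrimitive α σ m (log (r ^ α / t)))
      (gaussQ ((log (r ^ α / t) - m) / σ) * r) r := by
  have hlog : HasDerivAt (fun r ↦ log (r ^ α / t)) (α / r) r := by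
    refine ((((hasDerivAt_log hr.ne').const_mul α).sub_const (log t)).congr_of_eventuallyEq ?_)
      |>.congr_deriv (by field_simp)
    filter_upwards [Ioi_mem_nhds hr] with s hs
    exact log_rpow_div hs ht
  refine (((hasDerivAt_tailPrimitive m hα hσ _).comp r hlog).const_mul _).congr_deriv ?_
  set Q := gaussQ ((log (r ^ α / t) - m) / σ)
  calc t ^ (2 / α) * (exp (2 * log (r ^ α / t) / α) / α * Q * (α / r))
      = t ^ (2 / α) * exp (2 * log (r ^ α / t) / α) * Q / r := by
        field_simp
    _ = Q * r := by
        rw [rpow_two_div_mul_exp_log_rpow_div hα ht hr]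
        field_simp

lemma tendsto_log_rpow_div_nhdsGT_zero (hα : 0 < α) (ht : 0 < t) :
    Tendsto (fun r ↦ log (r ^ α / t)) (𝓝[>] 0) atBot := by
  refine (tendsto_atBot_add_const_right _ (-log t)
    (tendsto_log_nhdsGT_zero.const_mul_atBot hα)).congr' ?_
  filter_upwards [self_mem_nhdsWithin] with r (hr : 0 < r)
  rw [log_rpow_div hr ht, sub_eq_add_neg]

lemma tendsto_log_rpow_div_atTop (hα : 0 < α) (ht : 0 < t) :
    Tendsto (fun r ↦ log (r ^ α / t)) atTop atTop := by
  refine (tendsto_atTop_add_const_right _ (-log t)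
    (tendsto_log_atTop.const_mul_atTop hα)).congr' ?_
  filter_upwards [eventually_gt_atTop 0] with r hr
  rw [log_rpow_div hr ht, sub_eq_add_neg]

lemma intervalIntegrable_gaussQ_log_rpow_div_mul (D : ℝ) :
    IntervalIntegrable (fun r ↦ gaussQ ((log (r ^ α / t) - m) / σ) * r) volume 0 D := by
  refine (continuous_id.intervalIntegrable 0 D).mono_fun ?_ (ae_of_all _ fun r ↦ ?_)
  · have hQ := continuous_gaussQ.measurable
    have : Measurable fun r ↦ gaussQ ((log (r ^ α / t) - m) / σ) * r := by fun_prop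
    exact this.aestronglyMeasurable
  · simp only [norm_mul, id]
    exact mul_le_of_le_one_left (norm_nonneg _)
      (by rw [norm_of_nonneg (gaussQ_nonneg _)]; exact gaussQ_le_one _)

lemma integral_Ioo_gaussQ_log_rpow_div_mul (hα : 0 < α) (hσ : 0 < σ) (ht : 0 < t) {D : ℝ}
    (hD : 0 < D) :
    ∫ r in Ioo 0 D, gaussQ ((log (r ^ α / t) - m) / σ) * r
      = t ^ (2 / α) * tailPrimitive α σ m (log (D ^ α / t)) := by
  have hderiv := fun r (hr : 0 < r) ↦
    hasDerivAt_rpow_mul_tailPrimitive_log_rpow_div m hα.ne' hσ.ne' ht hr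
  have hzero : Tendsto (fun r ↦ t ^ (2 / α) * tailPrimitive α σ m (log (r ^ α / t)))
      (𝓝[>] 0) (𝓝 0) := by
    simpa using ((tendsto_tailPrimitive_atBot m hα hσ).comp
      (tendsto_log_rpow_div_nhdsGT_zero hα ht)).const_mul (t ^ (2 / α))
  rw [← integral_Ioc_eq_integral_Ioo, ← intervalIntegral.integral_of_le hD.le,
    intervalIntegral.integral_eq_sub_of_hasDerivAt_of_tendsto hD
      (fun r hr ↦ hderiv r hr.1) (intervalIntegrable_gaussQ_log_rpow_div_mul m D) hzero
      ((hderiv D hD).continuousAt.tendsto.mono_left nhdsWithin_le_nhds), sub_zero]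

lemma integral_Ioi_gaussQ_log_rpow_div_mul (hα : 0 < α) (hσ : 0 < σ) (ht : 0 < t) {D : ℝ}
    (hD : 0 < D) :
    ∫ r in Ioi D, gaussQ ((log (r ^ α / t) - m) / σ) * r
      = t ^ (2 / α) * exp (2 * σ ^ 2 / α ^ 2 + 2 * m / α) / 2
        - t ^ (2 / α) * tailPrimitive α σ m (log (D ^ α / t)) := by
  rw [mul_div_assoc]
  exact integral_Ioi_of_hasDerivAt_of_nonneg'
    (fun r hr ↦ hasDerivAt_rpow_mul_tailPrimitive_log_rpow_div m hα.ne' hσ.ne' ht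
      (hD.trans_le hr))
    (fun r hr ↦ mul_nonneg (gaussQ_nonneg _) (hD.trans hr).le)
    (((tendsto_tailPrimitive_atTop m hα hσ).comp (tendsto_log_rpow_div_atTop hα ht)).const_mul _)

end Radial

lemma setIntegral_prob_mul_gt_rpow {Ω : Type*} [MeasurableSpace Ω] {P : Measure Ω}
    {S : Ω → ℝ} (hS : Measurable S) (hSpos : ∀ᵐ ω ∂P, 0 < S ω) {m σ : ℝ} (hσ : 0 < σ)
    (hlog : P.map (fun ω ↦ log (S ω)) = gaussianReal m (σ ^ 2).toNNReal) {α t : ℝ} (ht : 0 < t)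
    {s : Set ℝ} (hs : MeasurableSet s) (hs_pos : s ⊆ Ioi 0) :
    ∫ r in s, (P {ω | t * S ω > r ^ α}).toReal * r
      = ∫ r in s, gaussQ ((log (r ^ α / t) - m) / σ) * r := by
  refine setIntegral_congr_fun hs fun r hr ↦ ?_
  have hset : {ω | t * S ω > r ^ α} = {ω | r ^ α / t < S ω} := by
    ext ω
    simp [div_lt_iff₀' ht]
  rw [← measureReal_def, hset, measureReal_lt_eq_gaussQ_of_map_log hS hSpos hσ hlog
    (div_pos (rpow_pos_of_pos (hs_pos hr) α) ht)]

theorem intensity_measure_closed_form_general {Ω : Type*} [MeasurableSpace Ω]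
    (Pr : Measure Ω)
    (lam D C αl αn ml mn σl σn : ℝ)
    (hD : 0 < D) (hC0 : 0 < C)
    (hαl : 0 < αl) (hαn : 0 < αn) (hσl : 0 < σl) (hσn : 0 < σn)
    (Sl Sn : Ω → ℝ) (hSl : Measurable Sl) (hSn : Measurable Sn)
    (hSlpos : ∀ᵐ ω ∂Pr, 0 < Sl ω) (hSnpos : ∀ᵐ ω ∂Pr, 0 < Sn ω)
    (hSllog : Measure.map (fun ω => Real.log (Sl ω)) Pr
      = ProbabilityTheory.gaussianReal ml (Real.toNNReal (σl ^ 2)))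
    (hSnlog : Measure.map (fun ω => Real.log (Sn ω)) Pr
      = ProbabilityTheory.gaussianReal mn (Real.toNNReal (σn ^ 2)))
    (t : ℝ) (ht : 0 < t) :
    2 * Real.pi * lam
        * (C * (∫ r in Set.Ioo (0 : ℝ) D, (Pr {ω | t * Sl ω > r ^ αl}).toReal * r)
          + (1 - C) * (∫ r in Set.Ioo (0 : ℝ) D, (Pr {ω | t * Sn ω > r ^ αn}).toReal * r)
          + ∫ r in Set.Ioi D, (Pr {ω | t * Sn ω > r ^ αn}).toReal * r)
      = lam * Real.pi * C
          * (D ^ 2 * (gaussQ ((Real.log (D ^ αl / t) - ml) / σl)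
                - gaussQ ((Real.log (D ^ αn / t) - mn) / σn))
            + t ^ (2 / αl) * Real.exp (2 * σl ^ 2 / αl ^ 2 + 2 * ml / αl)
                * gaussQ ((σl ^ 2 * (2 / αl) - Real.log (D ^ αl / t) + ml) / σl)
            + t ^ (2 / αn) * Real.exp (2 * σn ^ 2 / αn ^ 2 + 2 * mn / αn)
                * (1 / C - gaussQ ((σn ^ 2 * (2 / αn) - Real.log (D ^ αn / t) + mn) / σn))) := by
  rw [setIntegral_prob_mul_gt_rpow hSl hSlpos hσl hSllog ht measurableSet_Ioo
      fun r hr ↦ hr.1,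
    setIntegral_prob_mul_gt_rpow hSn hSnpos hσn hSnlog ht measurableSet_Ioo fun r hr ↦ hr.1,
    setIntegral_prob_mul_gt_rpow hSn hSnpos hσn hSnlog ht measurableSet_Ioi
      fun r hr ↦ hD.trans hr,
    integral_Ioo_gaussQ_log_rpow_div_mul ml hαl hσl ht hD,
    integral_Ioo_gaussQ_log_rpow_div_mul mn hαn hσn ht hD,
    integral_Ioi_gaussQ_log_rpow_div_mul mn hαn hσn ht hD,
    rpow_mul_tailPrimitive_log_rpow_div ml hαl.ne' ht hD,
    rpow_mul_tailPrimitive_log_rpow_div mn hαn.ne' ht hD]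
  field_simp
  ring

/-- Closed form for the intensity measure of the path-loss process (Lemma 1 of the paper).
`Sl` and `Sn` are lognormal with parameters `(ml, σl²)` and `(mn, σn²)` (i.e. their logarithms
are Gaussian), a link of length `r ≤ D` is LOS with probability `C` (path loss `r^{αl}/Sl`) and
NLOS otherwise (path loss `r^{αn}/Sn`), and links of length `r > D` are NLOS. -/
theorem intensity_measure_closed_form {Ω : Type*} [MeasurableSpace Ω]
    (Pr : Measure Ω) [IsProbabilityMeasure Pr]
    (lam D C αl αn ml mn σl σn : ℝ)
    (hlam : 0 < lam) (hD : 0 < D) (hC0 : 0 < C) (hC1 : C ≤ 1)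
    (hαl : 0 < αl) (hαn : 0 < αn) (hσl : 0 < σl) (hσn : 0 < σn)
    (Sl Sn : Ω → ℝ) (hSl : Measurable Sl) (hSn : Measurable Sn)
    (hSlpos : ∀ᵐ ω ∂Pr, 0 < Sl ω) (hSnpos : ∀ᵐ ω ∂Pr, 0 < Sn ω)
    (hSllog : Measure.map (fun ω => Real.log (Sl ω)) Pr
      = ProbabilityTheory.gaussianReal ml (Real.toNNReal (σl ^ 2)))
    (hSnlog : Measure.map (fun ω => Real.log (Sn ω)) Pr
      = ProbabilityTheory.gaussianReal mn (Real.toNNReal (σn ^ 2)))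
    (t : ℝ) (ht : 0 < t) :
    2 * Real.pi * lam
        * (C * (∫ r in Set.Ioo (0 : ℝ) D, (Pr {ω | t * Sl ω > r ^ αl}).toReal * r)
          + (1 - C) * (∫ r in Set.Ioo (0 : ℝ) D, (Pr {ω | t * Sn ω > r ^ αn}).toReal * r)
          + ∫ r in Set.Ioi D, (Pr {ω | t * Sn ω > r ^ αn}).toReal * r)
      = lam * Real.pi * C
          * (D ^ 2 * (gaussQ ((Real.log (D ^ αl / t) - ml) / σl)
                - gaussQ ((Real.log (D ^ αn / t) - mn) / σn))
            + t ^ (2 / αl) * Real.exp (2 * σl ^ 2 / αl ^ 2 + 2 * ml / αl)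
                * gaussQ ((σl ^ 2 * (2 / αl) - Real.log (D ^ αl / t) + ml) / σl)
            + t ^ (2 / αn) * Real.exp (2 * σn ^ 2 / αn ^ 2 + 2 * mn / αn)
                * (1 / C - gaussQ ((σn ^ 2 * (2 / αn) - Real.log (D ^ αn / t) + mn) / σn))) :=
  intensity_measure_closed_form_general Pr lam D C αl αn ml mn σl σn hD hC0 hαl hαn hσl hσn Sl Sn
    hSl hSn hSlpos hSnpos hSllog hSnlog t ht
end

section
/- Let D > 0, C ∈ (0, 1], α_l, α_n > 0, m_l, m_n ∈ ℝ, σ_l, σ_n > 0, and define M : (0, ∞) → ℝ by M(t) = πC·{ D²·[ Q((ln(D^{α_l}/t) − m_l)/σ_l) − Q((ln(D^{α_n}/t) − m_n)/σ_n) ] + t^{2/α_l}·exp(2σ_l²/α_l² + 2m_l/α_l)·Q((σ_l²·(2/α_l) − ln(D^{α_l}/t) + m_l)/σ_l) + t^{2/α_n}·exp(2σ_n²/α_n² + 2m_n/α_n)·[ 1/C − Q((σ_n²·(2/α_n) − ln(D^{α_n}/t) + m_n)/σ_n) ] }. Then M is differentiable on (0, ∞) and, for every t > 0, M'(t) = πC·{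 (D²/(√(2π)·t))·[ (1/σ_l)·exp(−((ln(D^{α_l}/t) − m_l)/√(2σ_l²))²) − (1/σ_n)·exp(−((ln(D^{α_n}/t) − m_n)/√(2σ_n²))²) ] + exp(2σ_l²/α_l² + 2m_l/α_l)·t^{2/α_l − 1}·[ (2/α_l)·Q((σ_l²·(2/α_l) − ln(D^{α_l}/t) + m_l)/σ_l) − (1/√(2πσ_l²))·exp(−((σ_l²·(2/α_l) − ln(D^{α_l}/t) + m_l)/√(2σ_l²))²) ] + exp(2σ_n²/α_n² + 2m_n/α_n)·t^{2/α_n − 1}·[ 2/(C·α_n) − (2/α_n)·Q((σ_n²·(2/α_n) − ln(D^{α_n}/t) + m_n)/σ_n) + (1/√(2πσ_n²))·exp(−((σ_n²·(2/α_n) − ln(D^{α_n}/t) + m_n)/√(2σ_n²))²) ] }. -/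
/-!
`Q` is the tail integral of the standard Gaussian density `φ`, so `Q' = -φ` by the fundamental
theorem of calculus, and `d/dt log (D ^ α / t) = -1/t`. Every summand of `M` is then
differentiated by the chain and product rules; what remains is an algebraic identity, in which
the Gaussian factors of (4) are recognised as `exp (-(x / √(2σ²))²) / √(2πσ²) = φ (x / σ) / σ`
for `σ > 0`.
-/

open MeasureTheory Real Set

/-- The normalized intensity measure `M(t) = Λ((0,t])/λ` of the path-loss process
of the mmWave blockage model (Lemma 1 of the paper). -/
noncomputable def Mfun (D C αl αn ml mn σl σn : ℝ) (t : ℝ) : ℝ :=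
  Real.pi * C
    * (D ^ 2 * (gaussQ ((Real.log (D ^ αl / t) - ml) / σl)
          - gaussQ ((Real.log (D ^ αn / t) - mn) / σn))
      + t ^ (2 / αl) * Real.exp (2 * σl ^ 2 / αl ^ 2 + 2 * ml / αl)
          * gaussQ ((σl ^ 2 * (2 / αl) - Real.log (D ^ αl / t) + ml) / σl)
      + t ^ (2 / αn) * Real.exp (2 * σn ^ 2 / αn ^ 2 + 2 * mn / αn)
          * (1 / C - gaussQ ((σn ^ 2 * (2 / αn) - Real.log (D ^ αn / t) + mn) / σn)))

/-- The derivative `M'(t)` of the normalized intensity measure, equation (4) of the paper. -/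
noncomputable def Mderiv (D C αl αn ml mn σl σn : ℝ) (t : ℝ) : ℝ :=
  Real.pi * C
    * (D ^ 2 / (Real.sqrt (2 * Real.pi) * t)
          * ((1 / σl) * Real.exp (-((Real.log (D ^ αl / t) - ml) / Real.sqrt (2 * σl ^ 2)) ^ 2)
            - (1 / σn) * Real.exp (-((Real.log (D ^ αn / t) - mn) / Real.sqrt (2 * σn ^ 2)) ^ 2))
      + Real.exp (2 * σl ^ 2 / αl ^ 2 + 2 * ml / αl) * t ^ (2 / αl - 1)
          * ((2 / αl) * gaussQ ((σl ^ 2 * (2 / αl) - Real.log (D ^ αl / t) + ml) / σl)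
            - (1 / Real.sqrt (2 * Real.pi * σl ^ 2))
                * Real.exp (-((σl ^ 2 * (2 / αl) - Real.log (D ^ αl / t) + ml)
                    / Real.sqrt (2 * σl ^ 2)) ^ 2))
      + Real.exp (2 * σn ^ 2 / αn ^ 2 + 2 * mn / αn) * t ^ (2 / αn - 1)
          * (2 / (C * αn)
            - (2 / αn) * gaussQ ((σn ^ 2 * (2 / αn) - Real.log (D ^ αn / t) + mn) / σn)
            + (1 / Real.sqrt (2 * Real.pi * σn ^ 2))
                * Real.exp (-((σn ^ 2 * (2 / αn) - Real.log (D ^ αn / t) + mn)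
                    / Real.sqrt (2 * σn ^ 2)) ^ 2)))

theorem hasDerivAt_integral_Ioi {E : Type*} [NormedAddCommGroup E] [NormedSpace ℝ E]
    [CompleteSpace E] {f : ℝ → E} (hf : Integrable f) (hcont : Continuous f) (x : ℝ) :
    HasDerivAt (fun y => ∫ u in Ioi y, f u) (-f x) x := by
  have hsplit : (fun y => ∫ u in Ioi y, f u) =
      fun y => (∫ u in Ioi 0, f u) - ∫ u in 0..y, f u := by
    funext y
    rw [← intervalIntegral.integral_Ioi_sub_Ioi' hf.integrableOn hf.integrableOn, sub_sub_cancel]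
  rw [hsplit, ← zero_sub]
  exact (hasDerivAt_const x _).sub <| intervalIntegral.integral_hasDerivAt_right
    hf.intervalIntegrable (hcont.stronglyMeasurableAtFilter _ _) hcont.continuousAt

theorem hasDerivAt_gaussQ_s6 (x : ℝ) :
    HasDerivAt gaussQ (-(exp (-x ^ 2 / 2) / √(2 * π))) x := by
  have hf : Integrable fun u : ℝ => exp (-u ^ 2 / 2) / √(2 * π) := by
    convert (integrable_exp_neg_mul_sq (b := 1 / 2) (by norm_num)).div_const (√(2 * π)) using 4
    ring
  exact hasDerivAt_integral_Ioi hf (by fun_prop) x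

theorem hasDerivAt_log_const_div {c t : ℝ} (hc : c ≠ 0) (ht : t ≠ 0) :
    HasDerivAt (fun s => log (c / s)) (-t⁻¹) t := by
  have h := ((hasDerivAt_inv ht).const_mul c).log
    (by simpa [← div_eq_mul_inv] using div_ne_zero hc ht)
  simp only [← div_eq_mul_inv] at h
  convert h using 1
  field_simp

theorem Mfun_hasDerivAt_general (D C αl αn ml mn σl σn : ℝ)
    (hD : 0 < D) (hσl : 0 < σl) (hσn : 0 < σn) :
    ∀ t > (0 : ℝ), HasDerivAt (Mfun D C αl αn ml mn σl σn)
      (Mderiv D C αl αn ml mn σl σn t) t := by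
  intro t ht
  have hlog (α : ℝ) : HasDerivAt (fun s => log (D ^ α / s)) (-t⁻¹) t :=
    hasDerivAt_log_const_div (rpow_pos_of_pos hD α).ne' ht.ne'
  have hQ (α m σ : ℝ) := (hasDerivAt_gaussQ_s6 _).comp t (((hlog α).sub_const m).div_const σ)
  have hQ' (α m σ : ℝ) := (hasDerivAt_gaussQ_s6 _).comp t
    ((((hlog α).const_sub (σ ^ 2 * (2 / α))).add_const m).div_const σ)
  have hpow (p : ℝ) := hasDerivAt_rpow_const (x := t) (p := p) (Or.inl ht.ne')
  have hM := (((((hQ αl ml σl).sub (hQ αn mn σn)).const_mul (D ^ 2)).add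
    (((hpow (2 / αl)).mul_const (exp (2 * σl ^ 2 / αl ^ 2 + 2 * ml / αl))).mul
      (hQ' αl ml σl))).add
    (((hpow (2 / αn)).mul_const (exp (2 * σn ^ 2 / αn ^ 2 + 2 * mn / αn))).mul
      ((hasDerivAt_const t (1 / C)).sub (hQ' αn mn σn)))).const_mul (π * C)
  refine hM.congr_deriv ?_
  have hsqrt {σ : ℝ} (hσ : 0 < σ) : √(2 * π * σ ^ 2) = √(2 * π) * σ := by
    rw [sqrt_mul (by positivity), sqrt_sq hσ.le]
  simp only [Mderiv, div_pow, sq_sqrt (by positivity : (0 : ℝ) ≤ 2 * σl ^ 2),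
    sq_sqrt (by positivity : (0 : ℝ) ≤ 2 * σn ^ 2), hsqrt hσl, hsqrt hσn, rpow_sub ht, rpow_one,
    Function.comp_apply, Pi.sub_apply]
  ring_nf

/-- Differentiability of the normalized intensity measure `M` on `(0,∞)` together with the
closed form (equation (4) of the paper) for its derivative `M'`. -/
theorem Mfun_hasDerivAt (D C αl αn ml mn σl σn : ℝ)
    (hD : 0 < D) (hC0 : 0 < C) (hC1 : C ≤ 1) (hαl : 0 < αl) (hαn : 0 < αn)
    (hσl : 0 < σl) (hσn : 0 < σn) :
    ∀ t > (0 : ℝ), HasDerivAt (Mfun D C αl αn ml mn σl σn)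
      (Mderiv D C αl αn ml mn σl σn t) t :=
  Mfun_hasDerivAt_general D C αl αn ml mn σl σn hD hσl hσn
end

section
/- Let c ≥ 0 and d > 0, and set t = c/d. Then the numbers K_t(c,d,n), n = 1, 2, 3, …, form a probability mass function with mean 1 + (9/7)·t; that is, ∑_{n≥1} K_t(c,d,n) = 1 and ∑_{n≥1} n·K_t(c,d,n) = 1 + (9/7)·(c/d) (the paper writes the coefficient 9/7 = 4.5/3.5 rounded as 1.28). -/
/-!
Writing `t = c / d` and `x = t / (3.5 + t)`, so that `1 - x = 3.5 / (3.5 + t)`, the term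
`K_t(c, d, n + 1)` is the negative binomial mass `Γ(r + n) / (Γ(r) n!) · xⁿ (1 - x)ʳ` with
`r = 4.5`. Both moments then come from the binomial series
`∑ Γ(r + n) / n! · xⁿ = Γ(r) (1 - x)⁻ʳ`: the total mass is `1` and the mean of `n` is
`r x / (1 - x) = (9/7) t`.
-/

open Real

/-- The load PMF of the tagged base station (Proposition 2 of the paper), defined for `n ≥ 1`:
`K_t(c,d,n) = (3.5^{3.5}/(n−1)!)·(Γ(n+3.5)/Γ(3.5))·(c/d)^{n−1}·(3.5 + c/d)^{−(n+3.5)}`. -/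
noncomputable def Ktpmf (c d : ℝ) (n : ℕ) : ℝ :=
  (3.5 : ℝ) ^ (3.5 : ℝ) / ((n - 1).factorial : ℝ)
    * (Real.Gamma ((n : ℝ) + 3.5) / Real.Gamma 3.5)
    * (c / d) ^ (n - 1) * (3.5 + c / d) ^ (-((n : ℝ) + 3.5))

open scoped Nat

theorem Real.Gamma_add_nat_eq_ascPochhammer_mul {a : ℝ} (ha : ∀ k : ℕ, a + k ≠ 0) (n : ℕ) :
    Gamma (a + n) = (ascPochhammer ℝ n).eval a * Gamma a := by
  induction n with
  | zero => simp
  | succ n ih =>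
    rw [Nat.cast_succ, ← add_assoc, Gamma_add_one (ha n), ih, ascPochhammer_succ_right]
    simp only [Polynomial.eval_mul, Polynomial.eval_add, Polynomial.eval_X,
      Polynomial.eval_natCast]
    ring

theorem Ring.choose_add_nat_sub_one_mul_factorial {R : Type*} [Field R] [CharZero R] (a : R)
    (n : ℕ) : Ring.choose (a + n - 1) n * n ! = (ascPochhammer R n).eval a := by
  rw [← Ring.multichoose_eq, ← Polynomial.ascPochhammer_smeval_eq_eval,
    ← Ring.factorial_nsmul_multichoose_eq_ascPochhammer, nsmul_eq_mul, mul_comm]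

theorem Real.hasSum_choose_add_sub_one_mul_pow (a : ℝ) {x : ℝ} (hx : |x| < 1) :
    HasSum (fun n : ℕ => Ring.choose (a + n - 1) n * x ^ n) ((1 - x) ^ a)⁻¹ := by
  have hx' : x ∈ Metric.eball (0 : ℝ) 1 := by
    rw [mem_eball_zero_iff, ← ofReal_norm, ENNReal.ofReal_lt_one]
    exact hx
  simpa [FormalMultilinearSeries.ofScalars_apply_eq, mul_comm]
    using (one_div_one_sub_rpow_hasFPowerSeriesOnBall_zero a).hasSum hx'

theorem Real.hasSum_Gamma_add_div_factorial_mul_pow {a x : ℝ} (ha : ∀ k : ℕ, a + k ≠ 0)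
    (hx : |x| < 1) :
    HasSum (fun n : ℕ => Gamma (a + n) / n ! * x ^ n) (Gamma a / (1 - x) ^ a) := by
  rw [div_eq_mul_inv]
  refine ((hasSum_choose_add_sub_one_mul_pow a hx).mul_left (Gamma a)).congr_fun fun n => ?_
  rw [Gamma_add_nat_eq_ascPochhammer_mul ha, ← Ring.choose_add_nat_sub_one_mul_factorial]
  field_simp

noncomputable def negBinomialMass (r x : ℝ) (n : ℕ) : ℝ :=
  Gamma (r + n) / (Gamma r * n !) * x ^ n * (1 - x) ^ r

section NegBinomial

variable {r x : ℝ}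

theorem hasSum_negBinomialMass (hr : 0 < r) (hx : |x| < 1) :
    HasSum (negBinomialMass r x) 1 := by
  have h1x : 0 < 1 - x := by linarith [(abs_lt.1 hx).2]
  have hΓ : Gamma r ≠ 0 := (Gamma_pos_of_pos hr).ne'
  have h := (hasSum_Gamma_add_div_factorial_mul_pow (fun k => by positivity) hx).mul_right
    ((1 - x) ^ r / Gamma r)
  rw [div_mul_div_cancel₀ (rpow_pos_of_pos h1x r).ne', div_self hΓ] at h
  refine h.congr_fun fun n => ?_
  rw [negBinomialMass]
  field_simp

theorem hasSum_nat_mul_negBinomialMass (hr : 0 < r) (hx : |x| < 1) :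
    HasSum (fun n : ℕ => n * negBinomialMass r x n) (r * x / (1 - x)) := by
  have h1x : 0 < 1 - x := by linarith [(abs_lt.1 hx).2]
  have hΓ : Gamma r ≠ 0 := (Gamma_pos_of_pos hr).ne'
  have hr' : ∀ k : ℕ, r + k ≠ 0 := fun k => by positivity
  have h := ((hasSum_Gamma_add_div_factorial_mul_pow (a := r + 1) (fun k => by positivity)
    hx).sub ((hasSum_Gamma_add_div_factorial_mul_pow hr' hx).mul_left r)).mul_right
    ((1 - x) ^ r / Gamma r)
  have hsum : (Gamma (r + 1) / (1 - x) ^ (r + 1) - r * (Gamma r / (1 - x) ^ r))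
      * ((1 - x) ^ r / Gamma r) = r * x / (1 - x) := by
    rw [Gamma_add_one hr.ne', rpow_add_one h1x.ne']
    field_simp
    ring
  rw [hsum] at h
  refine h.congr_fun fun n => ?_
  -- `n Γ(r + n) = Γ(r + 1 + n) - r Γ(r + n)`
  rw [negBinomialMass, add_right_comm, Gamma_add_one (hr' n)]
  field_simp
  ring

end NegBinomial

theorem negBinomialMass_add_one_div_add {α t : ℝ} (hα : 0 < α) (hαt : 0 < α + t) (n : ℕ) :
    negBinomialMass (α + 1) (t / (α + t)) n
      = α ^ α / n ! * (Gamma (n + (α + 1)) / Gamma α) * t ^ n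
        * (α + t) ^ (-(n + (α + 1))) := by
  have h1x : 1 - t / (α + t) = α / (α + t) := by field_simp; ring
  rw [negBinomialMass, h1x, div_pow, div_rpow hα.le hαt.le, Gamma_add_one hα.ne',
    rpow_add_one hα.ne', rpow_neg hαt.le, rpow_add hαt (n : ℝ), rpow_natCast, add_comm (n : ℝ)]
  field_simp

/-- For `c ≥ 0`, `d > 0`, the numbers `K_t(c,d,n)`, `n ≥ 1`, form a probability mass function
with mean `1 + (9/7)·(c/d)` (the paper rounds `9/7 = 4.5/3.5` as `1.28`):
`∑_{n≥1} K_t(c,d,n) = 1` and `∑_{n≥1} n·K_t(c,d,n) = 1 + (9/7)·(c/d)`. -/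
theorem Ktpmf_sum_one_and_mean (c d : ℝ) (hc : 0 ≤ c) (hd : 0 < d) :
    (∑' n : ℕ, Ktpmf c d (n + 1)) = 1
    ∧ (∑' n : ℕ, ((n : ℝ) + 1) * Ktpmf c d (n + 1)) = 1 + (9 / 7) * (c / d) := by
  set t := c / d
  have hαt : (0 : ℝ) < 3.5 + t := by positivity
  have hK : ∀ n : ℕ, Ktpmf c d (n + 1) = negBinomialMass (3.5 + 1) (t / (3.5 + t)) n := by
    intro n
    rw [negBinomialMass_add_one_div_add (by norm_num) hαt, Ktpmf, Nat.add_sub_cancel,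
      Nat.cast_succ, add_assoc, add_comm 1]
  have hx : |t / (3.5 + t)| < 1 := by
    rw [abs_of_nonneg (by positivity), div_lt_one hαt]
    norm_num
  have hsum := hasSum_negBinomialMass (r := 3.5 + 1) (by norm_num) hx
  have hmean := (hasSum_nat_mul_negBinomialMass (r := 3.5 + 1) (by norm_num) hx).add hsum
  simp only [hK, add_mul, one_mul]
  refine ⟨hsum.tsum_eq, ?_⟩
  rw [hmean.tsum_eq]
  field_simp
  ring
end
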